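/- Let p_0, p_1, ..., p_N be real numbers with either p_0 < p_1 < ⋯ < p_N or p_0 > p_1 > ⋯ > p_N, and let w_0, ..., w_N be positive weights. Let P_n(·;N) be a degree-n polynomial (1 ≤ n ≤ N-1) orthogonal to all polynomials of degree < n with respect to ⟨f,g⟩_N = Σ_{s=0}^{N-1} w_s f(p_s) g(p_s), and let P_n(·;N+1) be a degree-n polynomial orthogonal to all polynomials of degree < n with respect to ⟨f,g⟩_{N+1} = Σ_{s=0}^{N} w_s f(p_s) g(p_s). Let Y_1 < Y_2 < ⋯ < Y_n be the zeros of P_n(·;N) and set Y_0 = Y_{n+1} = p_N. If the points are strictly increasing, then P_n(·;N+1) has a zero in each interval (Y_k, Y_{k+1}) for every k ∈ {1, ..., n}; if the points are strictly decreasing, then P_n(·;N+1) has a zero in each interval (Y_k, Y_{k+1}) for every k ∈ {0, ..., n-1}. -/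

import Mathlib

/-!
Let `M = ∏ (X - Y i)`, a multiple of `P`, and `ℓ_k = M / (X - Y k)`. Since `M` is orthogonal for
`⟨·,·⟩_N` to every polynomial of degree `< n`, a Gauss-quadrature argument gives
`Q(Y k) ⟨ℓ_k, ℓ_k⟩_N = ℓ_k(Y k) ⟨Q, ℓ_k⟩_N`, and the orthogonality of `Q` for `⟨·,·⟩_{N+1}` turns
the right side into `-w_N Q(p_N) ℓ_k(p_N) ℓ_k(Y k)`. The zeros of `P` lie strictly inside the hull
of `p_0, …, p_{N-1}`, so `p_N` lies beyond all of them; then `ℓ_k(p_N) ℓ_k(Y k)` alternates in sign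
with `k` and is positive for the zero nearest to `p_N`. Hence `Q` changes sign between consecutive
zeros of `P`, and between the zero nearest to `p_N` and `p_N` itself. Here `Q(p_N) ≠ 0`, for
otherwise `Q` would vanish at every `Y k` and be a multiple of `P`, which does not vanish at `p_N`.
-/

open Polynomial Finset Lagrange

section Quadrature

variable {K ι : Type*} [Field K] {s : Finset ι} {v : ι → K}

theorem exists_eval_ne_zero_of_natDegree_lt_card (hv : Set.InjOn v s) {f : K[X]} (hf : f ≠ 0)
    (hdeg : f.natDegree < #s) : ∃ i ∈ s, f.eval (v i) ≠ 0 := by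
  by_contra! h
  exact hf (eq_zero_of_degree_lt_of_eval_index_eq_zero s hv
    (degree_le_natDegree.trans_lt (by exact_mod_cast hdeg)) h)

theorem eq_C_leadingCoeff_mul_nodal (hv : Set.InjOn v s) {P : K[X]} (hdeg : P.natDegree = #s)
    (hroot : ∀ i ∈ s, P.eval (v i) = 0) : P = C P.leadingCoeff * nodal s v := by
  rcases eq_or_ne P 0 with rfl | hP
  · simp
  have ha : P.leadingCoeff ≠ 0 := leadingCoeff_ne_zero.2 hP
  refine eq_of_degree_le_of_eval_index_eq s hv ?_ ?_ ?_ ?_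
  · rw [degree_eq_natDegree hP, hdeg]
  · rw [degree_C_mul ha, degree_nodal, degree_eq_natDegree hP, hdeg]
  · rw [leadingCoeff_mul, leadingCoeff_C, nodal_monic.leadingCoeff, mul_one]
  · intro i hi
    rw [hroot i hi, eval_mul, eval_nodal_at_node hi, mul_zero]

theorem apply_nodal_mul_eq_zero {L : K[X] →ₗ[K] K} (hv : Set.InjOn v s) {P : K[X]} (hP : P ≠ 0)
    (hdeg : P.natDegree = #s) (hroot : ∀ i ∈ s, P.eval (v i) = 0)
    (horth : ∀ f : K[X], f.natDegree < #s → L (P * f) = 0) :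
    ∀ f : K[X], f.natDegree < #s → L (nodal s v * f) = 0 := by
  intro f hf
  have h := horth f hf
  rw [eq_C_leadingCoeff_mul_nodal hv hdeg hroot, mul_assoc, C_mul', map_smul, smul_eq_mul] at h
  exact (mul_eq_zero.1 h).resolve_left (leadingCoeff_ne_zero.2 hP)

/-- With `ℓ = nodal (s.erase k) v`, the polynomial `ℓ(v k) F - F(v k) ℓ` vanishes at `v k`, so `ℓ`
times it is `nodal s v` times a polynomial of degree `< #s`, which `L` kills. -/
theorem eval_mul_apply_nodal_erase_mul_self [DecidableEq ι] {L : K[X] →ₗ[K] K}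
    (horth : ∀ f : K[X], f.natDegree < #s → L (nodal s v * f) = 0)
    {F : K[X]} (hF : F.natDegree ≤ #s) {k : ι} (hk : k ∈ s) :
    F.eval (v k) * L (nodal (s.erase k) v * nodal (s.erase k) v) =
      (nodal (s.erase k) v).eval (v k) * L (F * nodal (s.erase k) v) := by
  set ℓ := nodal (s.erase k) v
  set r := C (ℓ.eval (v k)) * F - C (F.eval (v k)) * ℓ
  have hroot : r.IsRoot (v k) := by simp [r, mul_comm]
  have hℓ : ℓ.natDegree ≤ #s := by
    rw [natDegree_nodal]; exact card_erase_le
  have hr : r.natDegree ≤ #s := max_self (#s) ▸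
    natDegree_sub_le_of_le (natDegree_C_mul_le _ _ |>.trans hF) (natDegree_C_mul_le _ _ |>.trans hℓ)
  have hq : (r /ₘ (X - C (v k))).natDegree < #s := by
    rw [natDegree_divByMonic _ (monic_X_sub_C _), natDegree_X_sub_C]
    have := card_pos.2 ⟨k, hk⟩
    omega
  have hzero : L (ℓ * r) = 0 := by
    rw [← mul_divByMonic_eq_iff_isRoot.2 hroot, ← mul_assoc, mul_comm ℓ,
      ← nodal_eq_mul_nodal_erase hk]
    exact horth _ hq
  have hexpand : ℓ * r = C (ℓ.eval (v k)) * (F * ℓ) - C (F.eval (v k)) * (ℓ * ℓ) := by ring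
  rw [hexpand, C_mul', C_mul', map_sub, map_smul, map_smul, smul_eq_mul, smul_eq_mul] at hzero
  linear_combination -hzero

theorem eval_mul_apply_nodal_erase_mul_self_eq_neg [DecidableEq ι] {L : K[X] →ₗ[K] K}
    (horth : ∀ f : K[X], f.natDegree < #s → L (nodal s v * f) = 0)
    {Q : K[X]} (hQdeg : Q.natDegree ≤ #s) {c t : K}
    (hQ : ∀ f : K[X], f.natDegree < #s → L (Q * f) + c * f.eval t = 0) {k : ι} (hk : k ∈ s) :
    Q.eval (v k) * L (nodal (s.erase k) v * nodal (s.erase k) v) =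
      -c * ((nodal (s.erase k) v).eval t * (nodal (s.erase k) v).eval (v k)) := by
  rw [eval_mul_apply_nodal_erase_mul_self horth hQdeg hk]
  have hℓ : (nodal (s.erase k) v).natDegree < #s := by
    rw [natDegree_nodal]; exact card_erase_lt_of_mem hk
  linear_combination (nodal (s.erase k) v).eval (v k) * hQ _ hℓ

end Quadrature

theorem eval_nodal_mul_eval_nodal_pos {ι : Type*} {T : Finset ι} {v : ι → ℝ} {u u' : ℝ}
    (h : ∀ i ∈ T, 0 < (u - v i) * (u' - v i)) :
    0 < (nodal T v).eval u * (nodal T v).eval u' := by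
  rw [eval_nodal, eval_nodal, ← prod_mul_distrib]
  exact prod_pos h

theorem eval_nodal_erase_mul_succ_neg {s : Finset ℕ} {v : ℕ → ℝ} (hv : StrictMonoOn v s) {k : ℕ}
    (hk : k ∈ s) (hk' : k + 1 ∈ s) {t : ℝ} (ht : (∀ i ∈ s, v i < t) ∨ ∀ i ∈ s, t < v i) :
    (nodal (s.erase k) v).eval t * (nodal (s.erase k) v).eval (v k) *
      ((nodal (s.erase (k + 1)) v).eval t * (nodal (s.erase (k + 1)) v).eval (v (k + 1))) < 0 := by
  set D := nodal ((s.erase k).erase (k + 1)) v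
  have h₁ : nodal (s.erase k) v = (X - C (v (k + 1))) * D :=
    nodal_eq_mul_nodal_erase (mem_erase.2 ⟨by omega, hk'⟩)
  have h₂ : nodal (s.erase (k + 1)) v = (X - C (v k)) * D := by
    rw [nodal_eq_mul_nodal_erase (mem_erase.2 ⟨by omega, hk⟩), erase_right_comm]
  have hlt : v k < v (k + 1) := hv hk hk' (Nat.lt_succ_self k)
  have hside : ∀ i ∈ s, ∀ j ∈ s, 0 < (t - v i) * (t - v j) := by
    rcases ht with h | h <;> intro i hi j hj
    · exact mul_pos (sub_pos.2 (h i hi)) (sub_pos.2 (h j hj))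
    · exact mul_pos_of_neg_of_neg (sub_neg.2 (h i hi)) (sub_neg.2 (h j hj))
  have hDt : 0 < D.eval t * D.eval t := eval_nodal_mul_eval_nodal_pos fun i hi =>
    hside i (mem_of_mem_erase (mem_of_mem_erase hi)) i (mem_of_mem_erase (mem_of_mem_erase hi))
  -- no node lies strictly between the consecutive nodes `v k` and `v (k + 1)`
  have hDv : 0 < D.eval (v k) * D.eval (v (k + 1)) := eval_nodal_mul_eval_nodal_pos fun i hi => by
    obtain ⟨hik', hik, his⟩ : i ≠ k + 1 ∧ i ≠ k ∧ i ∈ s := by simpa using hi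
    rcases lt_or_gt_of_ne hik with h | h
    · have := hv his hk h
      exact mul_pos (by linarith) (by linarith)
    · have := hv hk' his (by omega)
      exact mul_pos_of_neg_of_neg (by linarith) (by linarith)
  rw [h₁, h₂]
  simp only [eval_mul, eval_sub, eval_X, eval_C]
  linear_combination mul_pos (mul_pos (mul_pos (pow_pos (sub_pos.2 hlt) 2) (hside k hk _ hk')) hDt) hDv

section Discrete

variable {ι : Type*} (S : Finset ι) (w x : ι → ℝ)

noncomputable def discreteFunctional : ℝ[X] →ₗ[ℝ] ℝ :=
  ∑ s ∈ S, w s • leval (x s)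

theorem discreteFunctional_apply (f : ℝ[X]) :
    discreteFunctional S w x f = ∑ s ∈ S, w s * f.eval (x s) := by
  simp [discreteFunctional]

theorem sum_mul_eval_mul_eval (f g : ℝ[X]) :
    ∑ s ∈ S, w s * f.eval (x s) * g.eval (x s) = discreteFunctional S w x (f * g) := by
  simp only [discreteFunctional_apply, eval_mul, mul_assoc]

variable {S w x}

theorem discreteFunctional_mul_self_pos (hw : ∀ s ∈ S, 0 < w s) (hx : Set.InjOn x S)
    {f : ℝ[X]} (hf : f ≠ 0) (hdeg : f.natDegree < #S) :
    0 < discreteFunctional S w x (f * f) := by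
  obtain ⟨s, hs, hfs⟩ := exists_eval_ne_zero_of_natDegree_lt_card hx hf hdeg
  rw [discreteFunctional_apply]
  refine sum_pos' (fun s hs => ?_) ⟨s, hs, ?_⟩
  · rw [eval_mul]; exact mul_nonneg (hw s hs).le (mul_self_nonneg _)
  · rw [eval_mul]; exact mul_pos (hw s hs) (mul_self_pos.2 hfs)

/-- With `P = (X - z) q`, orthogonality to `q` says `∑ w s (x s - z) q(x s)² = 0`, and not all
terms vanish. -/
theorem exists_lt_and_exists_gt_of_isRoot (hw : ∀ s ∈ S, 0 < w s) (hx : Set.InjOn x S)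
    {P : ℝ[X]} (hP : P ≠ 0) (hdeg : P.natDegree < #S)
    (horth : ∀ f : ℝ[X], f.natDegree < P.natDegree → discreteFunctional S w x (P * f) = 0)
    {z : ℝ} (hz : P.IsRoot z) : (∃ s ∈ S, z < x s) ∧ ∃ s ∈ S, x s < z := by
  set q := P /ₘ (X - C z)
  have hPq : (X - C z) * q = P := mul_divByMonic_eq_iff_isRoot.2 hz
  have hq0 : q ≠ 0 := by rintro h; rw [h, mul_zero] at hPq; exact hP hPq.symm
  have hq : q.natDegree < P.natDegree := by
    rw [← hPq, natDegree_mul (X_sub_C_ne_zero z) hq0, natDegree_X_sub_C]; omega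
  set g : ι → ℝ := fun s => (x s - z) * (w s * q.eval (x s) ^ 2)
  have hg : ∀ s, g s = w s * P.eval (x s) * q.eval (x s) := fun s => by
    simp only [g, ← hPq, eval_mul, eval_sub, eval_X, eval_C]; ring
  have hsum : ∑ s ∈ S, g s = 0 := by
    simp only [hg, sum_mul_eval_mul_eval]; exact horth q hq
  obtain ⟨s, hs, hPs⟩ := exists_eval_ne_zero_of_natDegree_lt_card hx hP hdeg
  have hgs : g s ≠ 0 := by
    rw [hg]
    refine mul_ne_zero (mul_ne_zero (hw s hs).ne' hPs) fun h => hPs ?_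
    rw [← hPq, eval_mul, h, mul_zero]
  have hc : ∀ s ∈ S, 0 ≤ w s * q.eval (x s) ^ 2 := fun s hs => by have := hw s hs; positivity
  constructor
  · obtain ⟨s, hs, hpos⟩ := exists_pos_of_sum_zero_of_exists_nonzero g hsum ⟨s, hs, hgs⟩
    exact ⟨s, hs, sub_pos.1 (pos_of_mul_pos_left hpos (hc s hs))⟩
  · obtain ⟨s, hs, hpos⟩ := exists_pos_of_sum_zero_of_exists_nonzero (-g)
      (by simp only [Pi.neg_apply, sum_neg_distrib, hsum, neg_zero]) ⟨s, hs, neg_ne_zero.2 hgs⟩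
    rw [Pi.neg_apply, ← neg_mul, neg_sub] at hpos
    exact ⟨s, hs, sub_pos.1 (pos_of_mul_pos_left hpos (hc s hs))⟩

end Discrete

theorem exists_mem_Ioo_eq_zero_of_mul_neg {f : ℝ → ℝ} {a b : ℝ} (hab : a < b)
    (hf : ContinuousOn f (Set.Icc a b)) (h : f a * f b < 0) : ∃ y ∈ Set.Ioo a b, f y = 0 := by
  rcases mul_neg_iff.1 h with ⟨ha, hb⟩ | ⟨ha, hb⟩
  · exact intermediate_value_Ioo' hab.le hf ⟨hb, ha⟩
  · exact intermediate_value_Ioo hab.le hf ⟨ha, hb⟩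

section Interlacing

variable {s : Finset ℕ} {v : ℕ → ℝ} {L : ℝ[X] →ₗ[ℝ] ℝ} {Q : ℝ[X]} {w₀ t : ℝ}

theorem apply_nodal_erase_mul_self_pos
    (hpos : ∀ f : ℝ[X], f ≠ 0 → f.natDegree < #s → 0 < L (f * f)) {k : ℕ} (hk : k ∈ s) :
    0 < L (nodal (s.erase k) v * nodal (s.erase k) v) :=
  hpos _ nodal_ne_zero (by rw [natDegree_nodal]; exact card_erase_lt_of_mem hk)

theorem eval_ne_zero_of_forall_ne_node
    (horth : ∀ f : ℝ[X], f.natDegree < #s → L (nodal s v * f) = 0)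
    (hpos : ∀ f : ℝ[X], f ≠ 0 → f.natDegree < #s → 0 < L (f * f))
    (hQdeg : Q.natDegree = #s)
    (hQ : ∀ f : ℝ[X], f.natDegree < #s → L (Q * f) + w₀ * Q.eval t * f.eval t = 0)
    (hv : Set.InjOn v s) (hs : s.Nonempty) (ht : ∀ i ∈ s, t ≠ v i) : Q.eval t ≠ 0 := by
  intro h0
  have hroot : ∀ k ∈ s, Q.eval (v k) = 0 := fun k hk => by
    have e := eval_mul_apply_nodal_erase_mul_self_eq_neg horth hQdeg.le hQ hk
    rw [h0, mul_zero, neg_zero, zero_mul] at e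
    exact (mul_eq_zero.1 e).resolve_right (apply_nodal_erase_mul_self_pos (v := v) hpos hk).ne'
  have hQ0 : Q ≠ 0 := ne_zero_of_natDegree_gt (hQdeg ▸ card_pos.2 hs)
  have hQt := congrArg (eval t) (eq_C_leadingCoeff_mul_nodal hv hQdeg hroot)
  rw [h0, eval_mul, eval_C] at hQt
  exact mul_ne_zero (leadingCoeff_ne_zero.2 hQ0) (eval_nodal_not_at_node ht) hQt.symm

theorem eval_mul_eval_succ_neg
    (horth : ∀ f : ℝ[X], f.natDegree < #s → L (nodal s v * f) = 0)
    (hpos : ∀ f : ℝ[X], f ≠ 0 → f.natDegree < #s → 0 < L (f * f))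
    (hQdeg : Q.natDegree ≤ #s)
    (hQ : ∀ f : ℝ[X], f.natDegree < #s → L (Q * f) + w₀ * Q.eval t * f.eval t = 0)
    (hw₀ : w₀ ≠ 0) (hQt : Q.eval t ≠ 0) (hv : StrictMonoOn v s)
    (ht : (∀ i ∈ s, v i < t) ∨ ∀ i ∈ s, t < v i) {k : ℕ} (hk : k ∈ s) (hk' : k + 1 ∈ s) :
    Q.eval (v k) * Q.eval (v (k + 1)) < 0 := by
  refine neg_of_mul_neg_left ?_ (mul_pos (apply_nodal_erase_mul_self_pos (v := v) hpos hk)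
    (apply_nodal_erase_mul_self_pos (v := v) hpos hk')).le
  rw [mul_mul_mul_comm, eval_mul_apply_nodal_erase_mul_self_eq_neg horth hQdeg hQ hk,
    eval_mul_apply_nodal_erase_mul_self_eq_neg horth hQdeg hQ hk', mul_mul_mul_comm, neg_mul_neg]
  exact mul_neg_of_pos_of_neg (mul_self_pos.2 (mul_ne_zero hw₀ hQt))
    (eval_nodal_erase_mul_succ_neg hv hk hk' ht)

theorem eval_mul_eval_neg_of_forall_mul_pos
    (horth : ∀ f : ℝ[X], f.natDegree < #s → L (nodal s v * f) = 0)
    (hpos : ∀ f : ℝ[X], f ≠ 0 → f.natDegree < #s → 0 < L (f * f))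
    (hQdeg : Q.natDegree ≤ #s)
    (hQ : ∀ f : ℝ[X], f.natDegree < #s → L (Q * f) + w₀ * Q.eval t * f.eval t = 0)
    (hw₀ : 0 < w₀) (hQt : Q.eval t ≠ 0) {k : ℕ} (hk : k ∈ s)
    (hnear : ∀ i ∈ s.erase k, 0 < (t - v i) * (v k - v i)) :
    Q.eval (v k) * Q.eval t < 0 := by
  refine neg_of_mul_neg_left ?_ (apply_nodal_erase_mul_self_pos (v := v) hpos hk).le
  rw [mul_right_comm, eval_mul_apply_nodal_erase_mul_self_eq_neg horth hQdeg hQ hk]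
  linear_combination mul_pos (mul_pos hw₀ (mul_self_pos.2 hQt)) (eval_nodal_mul_eval_nodal_pos hnear)

variable {n : ℕ}

theorem exists_eval_eq_zero_of_forall_node_lt
    (horth : ∀ f : ℝ[X], f.natDegree < #(Icc 1 n) → L (nodal (Icc 1 n) v * f) = 0)
    (hpos : ∀ f : ℝ[X], f ≠ 0 → f.natDegree < #(Icc 1 n) → 0 < L (f * f))
    (hQdeg : Q.natDegree = #(Icc 1 n))
    (hQ : ∀ f : ℝ[X], f.natDegree < #(Icc 1 n) → L (Q * f) + w₀ * Q.eval t * f.eval t = 0)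
    (hw₀ : 0 < w₀) (hv : StrictMonoOn v (Icc 1 n)) (ht : ∀ i ∈ Icc 1 n, v i < t)
    (hvt : v (n + 1) = t) {k : ℕ} (hk : k ∈ Icc 1 n) :
    ∃ y ∈ Set.Ioo (v k) (v (k + 1)), Q.eval y = 0 := by
  have hQt := eval_ne_zero_of_forall_ne_node horth hpos hQdeg hQ hv.injOn ⟨k, hk⟩
    fun i hi => (ht i hi).ne'
  obtain ⟨hk1, hkn⟩ := mem_Icc.1 hk
  rcases hkn.lt_or_eq with hkn | rfl
  · have hk' : k + 1 ∈ Icc 1 n := mem_Icc.2 ⟨by omega, hkn⟩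
    exact exists_mem_Ioo_eq_zero_of_mul_neg (hv hk hk' (lt_add_one k)) Q.continuousOn
      (eval_mul_eval_succ_neg horth hpos hQdeg.le hQ hw₀.ne' hQt hv (Or.inl ht) hk hk')
  · rw [hvt]
    refine exists_mem_Ioo_eq_zero_of_mul_neg (ht k hk) Q.continuousOn
      (eval_mul_eval_neg_of_forall_mul_pos horth hpos hQdeg.le hQ hw₀ hQt hk fun i hi => ?_)
    obtain ⟨hik, hi⟩ := mem_erase.1 hi
    exact mul_pos (sub_pos.2 (ht i hi))
      (sub_pos.2 (hv hi hk ((mem_Icc.1 hi).2.lt_of_ne hik)))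

theorem exists_eval_eq_zero_of_forall_lt_node
    (horth : ∀ f : ℝ[X], f.natDegree < #(Icc 1 n) → L (nodal (Icc 1 n) v * f) = 0)
    (hpos : ∀ f : ℝ[X], f ≠ 0 → f.natDegree < #(Icc 1 n) → 0 < L (f * f))
    (hQdeg : Q.natDegree = #(Icc 1 n))
    (hQ : ∀ f : ℝ[X], f.natDegree < #(Icc 1 n) → L (Q * f) + w₀ * Q.eval t * f.eval t = 0)
    (hw₀ : 0 < w₀) (hv : StrictMonoOn v (Icc 1 n)) (ht : ∀ i ∈ Icc 1 n, t < v i)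
    (hvt : v 0 = t) {k : ℕ} (hk : k + 1 ≤ n) :
    ∃ y ∈ Set.Ioo (v k) (v (k + 1)), Q.eval y = 0 := by
  have h1 : 1 ∈ Icc 1 n := mem_Icc.2 ⟨le_rfl, by omega⟩
  have hQt := eval_ne_zero_of_forall_ne_node horth hpos hQdeg hQ hv.injOn ⟨1, h1⟩
    fun i hi => (ht i hi).ne
  rcases k.eq_zero_or_pos with rfl | hk1
  · rw [hvt]
    refine exists_mem_Ioo_eq_zero_of_mul_neg (ht 1 h1) Q.continuousOn ?_
    rw [mul_comm]
    refine eval_mul_eval_neg_of_forall_mul_pos horth hpos hQdeg.le hQ hw₀ hQt h1 fun i hi => ?_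
    obtain ⟨hi1, hi⟩ := mem_erase.1 hi
    exact mul_pos_of_neg_of_neg (sub_neg.2 (ht i hi))
      (sub_neg.2 (hv h1 hi ((mem_Icc.1 hi).1.lt_of_ne hi1.symm)))
  · have hk' : k + 1 ∈ Icc 1 n := mem_Icc.2 ⟨by omega, hk⟩
    have hk : k ∈ Icc 1 n := mem_Icc.2 ⟨hk1, by omega⟩
    exact exists_mem_Ioo_eq_zero_of_mul_neg (hv hk hk' (lt_add_one k)) Q.continuousOn
      (eval_mul_eval_succ_neg horth hpos hQdeg.le hQ hw₀.ne' hQt hv (Or.inr ht) hk hk')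

end Interlacing

theorem stmt_1_general (N n : ℕ) (hn : 1 ≤ n) (hnN : n ≤ N - 1)
    (p : ℕ → ℝ)
    (hpmono : (∀ i j, i < j → j ≤ N → p i < p j) ∨ (∀ i j, i < j → j ≤ N → p j < p i))
    (w : ℕ → ℝ) (hw : ∀ s ≤ N, 0 < w s)
    (P Q : Polynomial ℝ)
    (hPdeg : P.natDegree = n)
    (hPorth : ∀ f : Polynomial ℝ, f.natDegree < n →
      ∑ s ∈ Finset.range N, w s * P.eval (p s) * f.eval (p s) = 0)
    (hQdeg : Q.natDegree = n)
    (hQorth : ∀ f : Polynomial ℝ, f.natDegree < n →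
      ∑ s ∈ Finset.range (N + 1), w s * Q.eval (p s) * f.eval (p s) = 0)
    (Y : ℕ → ℝ)
    (hY0 : Y 0 = p N) (hYtop : Y (n + 1) = p N)
    (hYmono : ∀ i j, 1 ≤ i → i < j → j ≤ n → Y i < Y j)
    (hYroot : ∀ i, 1 ≤ i → i ≤ n → P.eval (Y i) = 0) :
    -- increasing case: a zero of `Q` in `(Y k, Y (k+1))` for every `k ∈ {1, …, n}`
    ((∀ i j, i < j → j ≤ N → p i < p j) →
      ∀ k, 1 ≤ k → k ≤ n → ∃ y ∈ Set.Ioo (Y k) (Y (k + 1)), Q.eval y = 0) ∧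
    -- decreasing case: a zero of `Q` in `(Y k, Y (k+1))` for every `k ∈ {0, …, n-1}`
    ((∀ i j, i < j → j ≤ N → p j < p i) →
      ∀ k, k + 1 ≤ n → ∃ y ∈ Set.Ioo (Y k) (Y (k + 1)), Q.eval y = 0) := by
  have hN : n < #(range N) := by rw [card_range]; omega
  have hcard : #(Icc 1 n) = n := by simp
  have hw' : ∀ s ∈ range N, 0 < w s := fun s hs => hw s (mem_range.1 hs).le
  have hp : Set.InjOn p (range N) := by
    refine Set.InjOn.mono (s₂ := Set.Iic N) (fun s hs => (mem_range.1 hs).le) ?_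
    exact hpmono.elim (fun h => StrictMonoOn.injOn fun i _ j hj hij => h i j hij hj)
      fun h => StrictAntiOn.injOn fun i _ j hj hij => h i j hij hj
  have hY : StrictMonoOn Y (Icc 1 n) := fun i hi j hj hij =>
    hYmono i j (mem_Icc.1 hi).1 hij (mem_Icc.1 hj).2
  have hroot : ∀ i ∈ Icc 1 n, P.IsRoot (Y i) := fun i hi =>
    hYroot i (mem_Icc.1 hi).1 (mem_Icc.1 hi).2
  have hP0 : P ≠ 0 := ne_zero_of_natDegree_gt (hPdeg ▸ hn)
  have hPL : ∀ f : ℝ[X], f.natDegree < P.natDegree →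
      discreteFunctional (range N) w p (P * f) = 0 := by
    simpa only [sum_mul_eval_mul_eval, hPdeg] using hPorth
  have hQL : ∀ f : ℝ[X], f.natDegree < #(Icc 1 n) →
      discreteFunctional (range N) w p (Q * f) + w N * Q.eval (p N) * f.eval (p N) = 0 := by
    intro f hf
    rw [← sum_mul_eval_mul_eval, ← sum_range_succ]
    exact hQorth f (hcard ▸ hf)
  have horth := apply_nodal_mul_eq_zero hY.injOn hP0 (hPdeg.trans hcard.symm) hroot
    (hPdeg.trans hcard.symm ▸ hPL)
  have hpos : ∀ f : ℝ[X], f ≠ 0 → f.natDegree < #(Icc 1 n) →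
      0 < discreteFunctional (range N) w p (f * f) := fun f hf hdeg =>
    discreteFunctional_mul_self_pos hw' hp hf (by omega)
  have hhull := fun i hi => exists_lt_and_exists_gt_of_isRoot hw' hp hP0 (by omega) hPL (hroot i hi)
  refine ⟨fun hinc k hk1 hkn => ?_, fun hdec k hkn => ?_⟩
  · refine exists_eval_eq_zero_of_forall_node_lt horth hpos (hQdeg.trans hcard.symm) hQL
      (hw N le_rfl) hY (fun i hi => ?_) hYtop (mem_Icc.2 ⟨hk1, hkn⟩)
    obtain ⟨s, hs, h⟩ := (hhull i hi).1
    exact h.trans (hinc s N (mem_range.1 hs) le_rfl)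
  · refine exists_eval_eq_zero_of_forall_lt_node horth hpos (hQdeg.trans hcard.symm) hQL
      (hw N le_rfl) hY (fun i hi => ?_) hY0 hkn
    obtain ⟨s, hs, h⟩ := (hhull i hi).2
    exact (hdec s N (mem_range.1 hs) le_rfl).trans h

/-- Interlacing of the zeros of discrete orthogonal polynomials when one
support point is added, for strictly monotone support points. Here `Y 1 < ⋯ < Y n` are
the zeros of `P` and `Y 0 = Y (n+1) = p N`. -/
theorem stmt_1 (N n : ℕ) (hn : 1 ≤ n) (hnN : n ≤ N - 1)
    (p : ℕ → ℝ)
    (hpmono : (∀ i j, i < j → j ≤ N → p i < p j) ∨ (∀ i j, i < j → j ≤ N → p j < p i))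
    (w : ℕ → ℝ) (hw : ∀ s ≤ N, 0 < w s)
    (P Q : Polynomial ℝ)
    (hPdeg : P.natDegree = n)
    (hPorth : ∀ f : Polynomial ℝ, f.natDegree < n →
      ∑ s ∈ Finset.range N, w s * P.eval (p s) * f.eval (p s) = 0)
    (hQdeg : Q.natDegree = n)
    (hQorth : ∀ f : Polynomial ℝ, f.natDegree < n →
      ∑ s ∈ Finset.range (N + 1), w s * Q.eval (p s) * f.eval (p s) = 0)
    (Y : ℕ → ℝ)
    (hY0 : Y 0 = p N) (hYtop : Y (n + 1) = p N)
    (hYmono : ∀ i j, 1 ≤ i → i < j → j ≤ n → Y i < Y j)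
    (hYroot : ∀ i, 1 ≤ i → i ≤ n → P.eval (Y i) = 0)
    (hYall : ∀ y : ℝ, P.eval y = 0 → ∃ i, 1 ≤ i ∧ i ≤ n ∧ y = Y i) :
    -- increasing case: a zero of `Q` in `(Y k, Y (k+1))` for every `k ∈ {1, …, n}`
    ((∀ i j, i < j → j ≤ N → p i < p j) →
      ∀ k, 1 ≤ k → k ≤ n → ∃ y ∈ Set.Ioo (Y k) (Y (k + 1)), Q.eval y = 0) ∧
    -- decreasing case: a zero of `Q` in `(Y k, Y (k+1))` for every `k ∈ {0, …, n-1}`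
    ((∀ i j, i < j → j ≤ N → p j < p i) →
      ∀ k, k + 1 ≤ n → ∃ y ∈ Set.Ioo (Y k) (Y (k + 1)), Q.eval y = 0) :=
  stmt_1_general N n hn hnN p hpmono w hw P Q hPdeg hPorth hQdeg hQorth Y hY0 hYtop hYmono hYroot
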